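/- The triple (231645, 231645, 326154) of permutations of {1,…,6} (in one-line notation) is a Schubert problem for S_6 that is not dc-equivalent to any dc-trivial Schubert problem and is not dc-equivalent to (id, id, w₀). -/
import Mathlib


/- Background definitions: descent-cycling for Schubert problems on S_n,
   with permutations modeled as `Equiv.Perm (Fin n)` (0-indexed positions:
   position i here corresponds to position i+1 in 1-indexed notation). -/

namespace DC

/-- A triple of permutations of {1,…,n}. -/
abbrev Triple (n : ℕ) := Equiv.Perm (Fin n) × Equiv.Perm (Fin n) × Equiv.Perm (Fin n)

/-- The length ℓ(π) = number of inversions of π. -/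
def len {n : ℕ} (π : Equiv.Perm (Fin n)) : ℕ :=
  (Finset.univ.filter (fun p : Fin n × Fin n => p.1 < p.2 ∧ π p.2 < π p.1)).card

/-- π has a descent at (0-indexed) position i, i.e. π(i) > π(i+1). -/
def Descent {n : ℕ} (π : Equiv.Perm (Fin n)) (i : ℕ) : Prop :=
  ∃ h : i + 1 < n, π ⟨i + 1, h⟩ < π ⟨i, Nat.lt_of_succ_lt h⟩

/-- π has an ascent at (0-indexed) position i, i.e. π(i) < π(i+1). -/
def Ascent {n : ℕ} (π : Equiv.Perm (Fin n)) (i : ℕ) : Prop :=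
  ∃ h : i + 1 < n, π ⟨i, Nat.lt_of_succ_lt h⟩ < π ⟨i + 1, h⟩

/-- The adjacent transposition s_i swapping (0-indexed) i and i+1. -/
def s (n i : ℕ) : Equiv.Perm (Fin n) :=
  if h : i + 1 < n then Equiv.swap ⟨i, Nat.lt_of_succ_lt h⟩ ⟨i + 1, h⟩ else 1

/-- The longest permutation w₀ : m ↦ n+1−m (0-indexed: m ↦ n−1−m). -/
def w0 (n : ℕ) : Equiv.Perm (Fin n) := Fin.revPerm

/-- The complement π̄ = w₀ ∘ π of a permutation. -/
def compl {n : ℕ} (π : Equiv.Perm (Fin n)) : Equiv.Perm (Fin n) := w0 n * π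

/-- A Schubert problem: a triple of permutations whose lengths sum to n(n−1)/2. -/
def IsSchubert {n : ℕ} (P : Triple n) : Prop :=
  len P.1 + len P.2.1 + len P.2.2 = n.choose 2

/-- A Schubert problem is dc-trivial if at some position all three permutations ascend. -/
def DCTrivial {n : ℕ} (P : Triple n) : Prop :=
  IsSchubert P ∧ ∃ i : ℕ, Ascent P.1 i ∧ Ascent P.2.1 i ∧ Ascent P.2.2 i

/-- The three Schubert problems obtainable from (u,v,w) by adding a descent at i. -/
def MoveSet {n : ℕ} (u v w : Equiv.Perm (Fin n)) (i : ℕ) : Set (Triple n) :=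
  {(u * s n i, v, w), (u, v * s n i, w), (u, v, w * s n i)}

/-- P and P′ are joined by a single descent-cycling move. -/
def DCMove {n : ℕ} (P P' : Triple n) : Prop :=
  ∃ (u v w : Equiv.Perm (Fin n)) (i : ℕ),
    len u + len v + len w + 1 = n.choose 2 ∧
    Ascent u i ∧ Ascent v i ∧ Ascent w i ∧
    P ∈ MoveSet u v w i ∧ P' ∈ MoveSet u v w i

/-- dc-equivalence: the reflexive–transitive closure of descent-cycling moves. -/
def DCEquiv {n : ℕ} : Triple n → Triple n → Prop := Relation.ReflTransGen DCMove

/-- An admissible functional on triples of permutations: constant on dc-equivalence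
classes of Schubert problems, zero on dc-trivial Schubert problems, one on (id,id,w₀). -/
def Admissible {n : ℕ} (f : Triple n → ℤ) : Prop :=
  (∀ P P' : Triple n, IsSchubert P → IsSchubert P' → DCEquiv P P' → f P = f P') ∧
  (∀ P : Triple n, DCTrivial P → f P = 0) ∧
  f (1, 1, w0 n) = 1

end DC

/-- The permutation 231645 (one-line notation, 0-indexed values). -/
noncomputable def u15 : Equiv.Perm (Fin 6) := Equiv.ofBijective ![1, 2, 0, 5, 3, 4] (by decide)
/-- The permutation 326154 (one-line notation, 0-indexed values). -/
noncomputable def w15 : Equiv.Perm (Fin 6) := Equiv.ofBijective ![2, 1, 5, 0, 4, 3] (by decide)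

section Aux

open DC

/-- one-line vectors -/
abbrev V6 := Fin 6 → Fin 6

def vlen (f : V6) : ℕ :=
  (Finset.univ.filter (fun p : Fin 6 × Fin 6 => p.1 < p.2 ∧ f p.2 < f p.1)).card

def vasc (f : V6) (i : ℕ) : Prop :=
  ∃ h : i + 1 < 6, f ⟨i, Nat.lt_of_succ_lt h⟩ < f ⟨i + 1, h⟩

instance (f : V6) (i : ℕ) : Decidable (vasc f i) := by
  unfold vasc; exact exists_prop_decidable _

def vmul (f : V6) (i : ℕ) : V6 := f ∘ ⇑(DC.s 6 i)

/-- the 27 triples of the dc-class, as one-line vectors -/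
def SL : List (V6 × V6 × V6) := [
  (![1,2,0,5,3,4], ![1,2,0,5,3,4], ![2,1,5,0,4,3]),
  (![1,2,0,5,3,4], ![1,2,0,5,4,3], ![2,1,5,0,3,4]),
  (![1,2,0,5,3,4], ![1,2,5,0,3,4], ![2,1,0,5,4,3]),
  (![1,2,0,5,3,4], ![1,2,5,0,4,3], ![2,1,0,5,3,4]),
  (![1,2,0,5,3,4], ![2,1,0,5,3,4], ![1,2,5,0,4,3]),
  (![1,2,0,5,3,4], ![2,1,0,5,4,3], ![1,2,5,0,3,4]),
  (![1,2,0,5,3,4], ![2,1,5,0,3,4], ![1,2,0,5,4,3]),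
  (![1,2,0,5,3,4], ![2,1,5,0,4,3], ![1,2,0,5,3,4]),
  (![1,2,0,5,4,3], ![1,2,0,5,3,4], ![2,1,5,0,3,4]),
  (![1,2,0,5,4,3], ![1,2,5,0,3,4], ![2,1,0,5,3,4]),
  (![1,2,0,5,4,3], ![2,1,0,5,3,4], ![1,2,5,0,3,4]),
  (![1,2,0,5,4,3], ![2,1,5,0,3,4], ![1,2,0,5,3,4]),
  (![1,2,5,0,3,4], ![1,2,0,5,3,4], ![2,1,0,5,4,3]),
  (![1,2,5,0,3,4], ![1,2,0,5,4,3], ![2,1,0,5,3,4]),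
  (![1,2,5,0,3,4], ![2,1,0,5,3,4], ![1,2,0,5,4,3]),
  (![1,2,5,0,3,4], ![2,1,0,5,4,3], ![1,2,0,5,3,4]),
  (![1,2,5,0,4,3], ![1,2,0,5,3,4], ![2,1,0,5,3,4]),
  (![1,2,5,0,4,3], ![2,1,0,5,3,4], ![1,2,0,5,3,4]),
  (![2,1,0,5,3,4], ![1,2,0,5,3,4], ![1,2,5,0,4,3]),
  (![2,1,0,5,3,4], ![1,2,0,5,4,3], ![1,2,5,0,3,4]),
  (![2,1,0,5,3,4], ![1,2,5,0,3,4], ![1,2,0,5,4,3]),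
  (![2,1,0,5,3,4], ![1,2,5,0,4,3], ![1,2,0,5,3,4]),
  (![2,1,0,5,4,3], ![1,2,0,5,3,4], ![1,2,5,0,3,4]),
  (![2,1,0,5,4,3], ![1,2,5,0,3,4], ![1,2,0,5,3,4]),
  (![2,1,5,0,3,4], ![1,2,0,5,3,4], ![1,2,0,5,4,3]),
  (![2,1,5,0,3,4], ![1,2,0,5,4,3], ![1,2,0,5,3,4]),
  (![2,1,5,0,4,3], ![1,2,0,5,3,4], ![1,2,0,5,3,4])
]

abbrev vcond (a b c : V6) (i : ℕ) : Prop :=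
  vlen a + vlen b + vlen c + 1 = 15 ∧ vasc a i ∧ vasc b i ∧ vasc c i

abbrev vraised (a b c : V6) (i : ℕ) : Prop :=
  (vmul a i, b, c) ∈ SL ∧ (a, vmul b i, c) ∈ SL ∧ (a, b, vmul c i) ∈ SL

def inS (P : DC.Triple 6) : Prop :=
  ∃ t ∈ SL, ⇑P.1 = t.1 ∧ ⇑P.2.1 = t.2.1 ∧ ⇑P.2.2 = t.2.2

set_option maxRecDepth 4000 in
lemma key : ∀ t ∈ SL, ∀ i < 5,
    (vcond (vmul t.1 i) t.2.1 t.2.2 i → vraised (vmul t.1 i) t.2.1 t.2.2 i) ∧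
    (vcond t.1 (vmul t.2.1 i) t.2.2 i → vraised t.1 (vmul t.2.1 i) t.2.2 i) ∧
    (vcond t.1 t.2.1 (vmul t.2.2 i) i → vraised t.1 t.2.1 (vmul t.2.2 i) i) := by
  intro t ht i hi
  fin_cases ht <;> interval_cases i <;>
    refine ⟨fun h => ?_, fun h => ?_, fun h => ?_⟩ <;>
    first
      | exact absurd h (by decide)
      | exact (by decide)

lemma s_mul_self (i : ℕ) : DC.s 6 i * DC.s 6 i = 1 := by
  unfold DC.s
  split
  · exact Equiv.swap_mul_self _ _
  · simp

lemma len_eq (π : Equiv.Perm (Fin 6)) : DC.len π = vlen ⇑π := rfl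

lemma asc_iff (π : Equiv.Perm (Fin 6)) (i : ℕ) : DC.Ascent π i ↔ vasc ⇑π i := Iff.rfl

lemma coe_mul_s (π : Equiv.Perm (Fin 6)) (i : ℕ) : ⇑(π * DC.s 6 i) = vmul ⇑π i := rfl

lemma mem_moveset {u v w : Equiv.Perm (Fin 6)} {i : ℕ} {P : DC.Triple 6} :
    P ∈ DC.MoveSet u v w i ↔
      P = (u * DC.s 6 i, v, w) ∨ P = (u, v * DC.s 6 i, w) ∨ P = (u, v, w * DC.s 6 i) := by
  simp [DC.MoveSet, Set.mem_insert_iff]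

lemma closed : ∀ P P' : DC.Triple 6, inS P → DC.DCMove P P' → inS P' := by
  rintro P P' ⟨t, htS, h1, h2, h3⟩ ⟨u, v, w, i, hlen, hu, hv, hw, hP, hP'⟩
  have hi6 : i + 1 < 6 := hu.choose
  have hi : i < 5 := by omega
  have hk := key t htS i hi
  -- determine (⇑u,⇑v,⇑w) in terms of t
  have hcond : vcond ⇑u ⇑v ⇑w i := ⟨hlen, hu, hv, hw⟩
  have hraised : vraised ⇑u ⇑v ⇑w i := by
    rcases mem_moveset.1 hP with h | h | h
    · have e1 : ⇑u = vmul t.1 i := by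
        have : u = P.1 * DC.s 6 i := by
          rw [h]; simp [mul_assoc, s_mul_self]
        rw [this, coe_mul_s, h1]
      have e2 : ⇑v = t.2.1 := by rw [h] at h2; exact h2
      have e3 : ⇑w = t.2.2 := by rw [h] at h3; exact h3
      rw [e1, e2, e3] at hcond ⊢
      exact hk.1 hcond
    · have e1 : ⇑u = t.1 := by rw [h] at h1; exact h1
      have e2 : ⇑v = vmul t.2.1 i := by
        have : v = P.2.1 * DC.s 6 i := by
          rw [h]; simp [mul_assoc, s_mul_self]
        rw [this, coe_mul_s, h2]
      have e3 : ⇑w = t.2.2 := by rw [h] at h3; exact h3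
      rw [e1, e2, e3] at hcond ⊢
      exact hk.2.1 hcond
    · have e1 : ⇑u = t.1 := by rw [h] at h1; exact h1
      have e2 : ⇑v = t.2.1 := by rw [h] at h2; exact h2
      have e3 : ⇑w = vmul t.2.2 i := by
        have : w = P.2.2 * DC.s 6 i := by
          rw [h]; simp [mul_assoc, s_mul_self]
        rw [this, coe_mul_s, h3]
      rw [e1, e2, e3] at hcond ⊢
      exact hk.2.2 hcond
  rcases mem_moveset.1 hP' with h | h | h
  · exact ⟨(vmul ⇑u i, ⇑v, ⇑w), hraised.1, by rw [h]; exact ⟨coe_mul_s u i, rfl, rfl⟩⟩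
  · exact ⟨(⇑u, vmul ⇑v i, ⇑w), hraised.2.1, by rw [h]; exact ⟨rfl, coe_mul_s v i, rfl⟩⟩
  · exact ⟨(⇑u, ⇑v, vmul ⇑w i), hraised.2.2, by rw [h]; exact ⟨rfl, rfl, coe_mul_s w i⟩⟩

lemma start_inS : inS (u15, u15, w15) := by
  refine ⟨(![1,2,0,5,3,4], ![1,2,0,5,3,4], ![2,1,5,0,4,3]), ?_, rfl, rfl, rfl⟩
  decide

lemma reach_inS {Q : DC.Triple 6} (h : DC.DCEquiv (u15, u15, w15) Q) : inS Q := by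
  induction h with
  | refl => exact start_inS
  | tail _ hmove ih => exact closed _ _ ih hmove

set_option maxRecDepth 4000 in
lemma no_trivial : ∀ t ∈ SL, ∀ i < 5, ¬ (vasc t.1 i ∧ vasc t.2.1 i ∧ vasc t.2.2 i) := by
  intro t ht i hi
  fin_cases ht <;> interval_cases i <;> exact (by decide)

set_option maxRecDepth 4000 in
lemma not_idw0 : ∀ t ∈ SL, ¬ ((id : V6) = t.1 ∧ (id : V6) = t.2.1 ∧ ⇑(Fin.revPerm : Equiv.Perm (Fin 6)) = t.2.2) := by
  intro t ht
  fin_cases ht <;> exact (by decide)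

end Aux

/-- (231645, 231645, 326154) is a Schubert problem for S_6 that is not dc-equivalent
to any dc-trivial Schubert problem and is not dc-equivalent to (id, id, w₀). -/
theorem statement15 :
    DC.IsSchubert (u15, u15, w15) ∧
    (¬ ∃ Q : DC.Triple 6, DC.DCTrivial Q ∧ DC.DCEquiv (u15, u15, w15) Q) ∧
    ¬ DC.DCEquiv (u15, u15, w15) (1, 1, DC.w0 6) := by
  refine ⟨(by decide : DC.len u15 + DC.len u15 + DC.len w15 = Nat.choose 6 2), ?_, ?_⟩
  · rintro ⟨Q, hQtriv, hEq⟩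
    obtain ⟨i, ha1, ha2, ha3⟩ := hQtriv.2
    obtain ⟨t, htS, h1, h2, h3⟩ := reach_inS hEq
    have hi6 : i + 1 < 6 := ha1.choose
    have hi : i < 5 := by omega
    exact no_trivial t htS i hi
      ⟨h1 ▸ (asc_iff Q.1 i).1 ha1, h2 ▸ (asc_iff Q.2.1 i).1 ha2, h3 ▸ (asc_iff Q.2.2 i).1 ha3⟩
  · intro h
    obtain ⟨t, htS, h1, h2, h3⟩ := reach_inS h
    exact not_idw0 t htS ⟨h1, h2, h3⟩
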